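/- Let C be a crystal framework in ℝ^d with |E₀| = d|V₀| (Maxwell counting equilibrium), so that its symbol Φ_C(z) is a square matrix. Define the product framework C̃ in ℝ^{d+1} with the same motif vertex set V₀, placement p̃(v) = (p(v), 0), lattice vectors ã_j = (a_j, 0) for 1 ≤ j ≤ d and ã_{d+1} = (0,…,0,1), and motif edges: for each motif edge ((v,l),(w,m)) of C the edge ((v,(l,0)),(w,(m,0))), together with for each v ∈ V₀ the vertical edge ((v,0),(v,ε_{d+1})), where ε_{d+1} = (0,…,0,1) ∈ ℤ^{d+1}. Then for all (z₁,…,z_d,z_{d+1}) ∈ 𝕋^{d+1}, det Φ_{C̃}(z₁,…,z_d,z_{d+1}) = ± (z̄_{d+1} − 1)^{|V₀|} · det Φ_C(z₁,…,z_d), where the sign ±1 depends only on the chosen orderings of the rows and columns of the two symbol matrices. -/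

import Mathlib

open Filter

noncomputable section

/-- The multi-power `z^k = z₁^{k₁} ⋯ z_d^{k_d}` for `z ∈ ℂ^d`, `k ∈ ℤ^d`. -/
def zpowVec {d : ℕ} (z : Fin d → ℂ) (k : Fin d → ℤ) : ℂ := ∏ j, z j ^ (k j)

/-- Membership in the `d`-torus `𝕋^d`. -/
def OnTorus {d : ℕ} (z : Fin d → ℂ) : Prop := ∀ j, ‖z j‖ = 1

/-- A crystal framework in `ℝ^d`: a finite motif of vertices `V` placed by `p`,
a full-rank translation lattice generated by `a₁, …, a_d`, and a finite set of
motif edges `E` with endpoints `fst e = (v, l)` and `snd e = (w, m)` standing for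
the joints `p(v, l)` and `p(w, m)`.  Joints are pairwise distinct and edge vectors
are nonzero. -/
structure CrystalFramework (d : ℕ) where
  V : Type
  fintypeV : Fintype V
  decV : DecidableEq V
  E : Type
  fintypeE : Fintype E
  p : V → Fin d → ℝ
  a : Fin d → Fin d → ℝ
  indep : LinearIndependent ℝ a
  fst : E → V × (Fin d → ℤ)
  snd : E → V × (Fin d → ℤ)
  joint_injective : Function.Injective
    (fun vk : V × (Fin d → ℤ) =>
      (fun i => p vk.1 i + ∑ j, (vk.2 j : ℝ) * a j i : Fin d → ℝ))
  edge_nonzero : ∀ e : E,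
    (fun i => p (fst e).1 i + ∑ j, ((fst e).2 j : ℝ) * a j i : Fin d → ℝ) ≠
    (fun i => p (snd e).1 i + ∑ j, ((snd e).2 j : ℝ) * a j i)

attribute [instance] CrystalFramework.fintypeV CrystalFramework.decV CrystalFramework.fintypeE

namespace CrystalFramework

variable {d : ℕ} (C : CrystalFramework d)

/-- The joint `p(v, k) = p(v) + k₁a₁ + ⋯ + k_d a_d`. -/
def joint (v : C.V) (k : Fin d → ℤ) : Fin d → ℝ :=
  fun i => C.p v i + ∑ j, (k j : ℝ) * C.a j i

/-- The edge vector `p(e) = p(v, l) - p(w, m)` for the motif edge `e = ((v,l),(w,m))`. -/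
def edgeVec (e : C.E) : Fin d → ℝ :=
  fun i => C.joint (C.fst e).1 (C.fst e).2 i - C.joint (C.snd e).1 (C.snd e).2 i

/-- A complex velocity field `u` is an infinitesimal flex:
`p(e) ⋅ (u(v, l+k) - u(w, m+k)) = 0` for every motif edge and every `k ∈ ℤ^d`. -/
def IsFlex (u : C.V × (Fin d → ℤ) → Fin d → ℂ) : Prop :=
  ∀ (e : C.E) (k : Fin d → ℤ),
    ∑ i, (C.edgeVec e i : ℂ) *
      (u ((C.fst e).1, fun j => (C.fst e).2 j + k j) i -
       u ((C.snd e).1, fun j => (C.snd e).2 j + k j) i) = 0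

/-- A real velocity field `u` is an infinitesimal flex. -/
def IsRealFlex (u : C.V × (Fin d → ℤ) → Fin d → ℝ) : Prop :=
  ∀ (e : C.E) (k : Fin d → ℤ),
    ∑ i, C.edgeVec e i *
      (u ((C.fst e).1, fun j => (C.fst e).2 j + k j) i -
       u ((C.snd e).1, fun j => (C.snd e).2 j + k j) i) = 0

/-- A complex velocity field is trivial if the flex condition holds for every pair of joints. -/
def IsTrivial (u : C.V × (Fin d → ℤ) → Fin d → ℂ) : Prop :=
  ∀ (v w : C.V) (k k' : Fin d → ℤ),
    ∑ i, ((C.joint v k i - C.joint w k' i : ℝ) : ℂ) * (u (v, k) i - u (w, k') i) = 0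

/-- A real velocity field is trivial if the flex condition holds for every pair of joints. -/
def IsRealTrivial (u : C.V × (Fin d → ℤ) → Fin d → ℝ) : Prop :=
  ∀ (v w : C.V) (k k' : Fin d → ℤ),
    ∑ i, (C.joint v k i - C.joint w k' i) * (u (v, k) i - u (w, k') i) = 0

/-- A complex velocity field is strictly periodic if `u(v,k) = u(v,0)`. -/
def StrictlyPeriodic (u : C.V × (Fin d → ℤ) → Fin d → ℂ) : Prop :=
  ∀ (v : C.V) (k : Fin d → ℤ), u (v, k) = u (v, 0)

/-- A real velocity field is strictly periodic if `u(v,k) = u(v,0)`. -/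
def StrictlyPeriodicReal (u : C.V × (Fin d → ℤ) → Fin d → ℝ) : Prop :=
  ∀ (v : C.V) (k : Fin d → ℤ), u (v, k) = u (v, 0)

/-- The `ω`-phase-periodic velocity field `b ⊗ e_ω : (v,k) ↦ ω^k b(v)`. -/
def phaseField (ω : Fin d → ℂ) (b : C.V → Fin d → ℂ) :
    C.V × (Fin d → ℤ) → Fin d → ℂ :=
  fun vk i => zpowVec ω vk.2 * b vk.1 i

/-- The symbol function `Φ_C(z)`: the row of the motif edge `e = ((v,l),(w,m))` has
entries `z̄^l p(e)` in the columns of `v` and `-z̄^m p(e)` in the columns of `w`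
(in particular entries `(z̄^l - z̄^m) p(e)` in the columns of `v` when `v = w`). -/
def symbol (z : Fin d → ℂ) : Matrix C.E (C.V × Fin d) ℂ :=
  Matrix.of fun e xi =>
    (C.edgeVec e xi.2 : ℂ) *
      ((if xi.1 = (C.fst e).1 then
          zpowVec (fun j => (starRingEnd ℂ) (z j)) (C.fst e).2 else 0) -
       (if xi.1 = (C.snd e).1 then
          zpowVec (fun j => (starRingEnd ℂ) (z j)) (C.snd e).2 else 0))

/-- The RUM spectrum `Ω(C)`: the set of `ω ∈ 𝕋^d` admitting a nonzero
`ω`-phase-periodic infinitesimal flex. -/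
def RUM : Set (Fin d → ℂ) :=
  {ω | OnTorus ω ∧ ∃ b : C.V → Fin d → ℂ, b ≠ 0 ∧ C.IsFlex (C.phaseField ω b)}

end CrystalFramework

/-!
Order the rows of `Φ_{C̃}` as old edges followed by vertical edges, and the columns as
`(v, i)` with `i ≤ d` followed by `(v, d+1)`. Padding with a zero coordinate leaves the old
edge vectors with last coordinate `0`, while every vertical edge has edge vector `-e_{d+1}`
and phases `1` and `z̄_{d+1}` at its two ends. Hence `Φ_{C̃}(z)` becomes block diagonal,
`diag(Φ_C(z₁,…,z_d), (z̄_{d+1} - 1) I)`, and the two orderings differ by one fixed permutation,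
whose sign is the `±1`.
-/

lemma zpowVec_zero {d : ℕ} (z : Fin d → ℂ) : zpowVec z 0 = 1 := by
  simp [zpowVec]

lemma zpowVec_snoc {d : ℕ} (z : Fin (d + 1) → ℂ) (l : Fin d → ℤ) (k : ℤ) :
    zpowVec z (Fin.snoc l k) = zpowVec (fun t => z t.castSucc) l * z (Fin.last d) ^ k := by
  simp [zpowVec, Fin.prod_univ_castSucc]

def sumProdEquivProdFinSucc {d : ℕ} {V W : Type} (eV : W ≃ V) :
    ((V × Fin d) ⊕ V) ≃ W × Fin (d + 1) where
  toFun := Sum.elim (fun vi => (eV.symm vi.1, vi.2.castSucc)) (fun v => (eV.symm v, Fin.last d))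
  invFun := fun wj => Fin.lastCases (Sum.inr (eV wj.1)) (fun i => Sum.inl (eV wj.1, i)) wj.2
  left_inv := by rintro (⟨v, i⟩ | v) <;> simp
  right_inv := by
    rintro ⟨w, j⟩
    induction j using Fin.lastCases <;> simp

namespace CrystalFramework

/-- `Ct` is the product `C × C_ℤ`, its motif vertices and edges identified via `eV` and `eE`. -/
structure IsProduct {d : ℕ} (C : CrystalFramework d) (Ct : CrystalFramework (d + 1))
    (eV : Ct.V ≃ C.V) (eE : Ct.E ≃ C.E ⊕ C.V) : Prop where
  p_eq : ∀ v : Ct.V, Ct.p v = Fin.snoc (C.p (eV v)) 0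
  a_castSucc : ∀ j : Fin d, Ct.a j.castSucc = Fin.snoc (C.a j) 0
  a_last : Ct.a (Fin.last d) = Fin.snoc (0 : Fin d → ℝ) 1
  ends_inl : ∀ e : C.E,
    Ct.fst (eE.symm (Sum.inl e)) = (eV.symm (C.fst e).1, Fin.snoc (C.fst e).2 0) ∧
    Ct.snd (eE.symm (Sum.inl e)) = (eV.symm (C.snd e).1, Fin.snoc (C.snd e).2 0)
  ends_inr : ∀ v : C.V,
    Ct.fst (eE.symm (Sum.inr v)) = (eV.symm v, 0) ∧
    Ct.snd (eE.symm (Sum.inr v)) = (eV.symm v, Fin.snoc (0 : Fin d → ℤ) 1)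

namespace IsProduct

variable {d : ℕ} {C : CrystalFramework d} {Ct : CrystalFramework (d + 1)}
  {eV : Ct.V ≃ C.V} {eE : Ct.E ≃ C.E ⊕ C.V}

lemma joint_snoc (h : IsProduct C Ct eV eE) (v : C.V) (l : Fin d → ℤ) (k : ℤ) :
    Ct.joint (eV.symm v) (Fin.snoc l k) = Fin.snoc (C.joint v l) (k : ℝ) := by
  ext i
  induction i using Fin.lastCases <;>
    simp [joint, h.p_eq, h.a_castSucc, h.a_last, Fin.sum_univ_castSucc]

lemma edgeVec_inl (h : IsProduct C Ct eV eE) (e : C.E) :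
    Ct.edgeVec (eE.symm (Sum.inl e)) = Fin.snoc (C.edgeVec e) 0 := by
  ext i
  induction i using Fin.lastCases <;>
    simp [edgeVec, (h.ends_inl e).1, (h.ends_inl e).2, h.joint_snoc]

lemma edgeVec_inr (h : IsProduct C Ct eV eE) (v : C.V) :
    Ct.edgeVec (eE.symm (Sum.inr v)) = Fin.snoc 0 (-1) := by
  have h0 : (0 : Fin (d + 1) → ℤ) = Fin.snoc 0 0 := by
    ext i
    induction i using Fin.lastCases <;> simp
  ext i
  induction i using Fin.lastCases <;>
    simp [edgeVec, (h.ends_inr v).1, (h.ends_inr v).2, h0, h.joint_snoc]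

lemma symbol_submatrix_eq_fromBlocks (h : IsProduct C Ct eV eE) {m : Type} (f : m → C.E)
    (z : Fin (d + 1) → ℂ) :
    (Ct.symbol z).submatrix (fun r => eE.symm (Sum.map f id r)) (sumProdEquivProdFinSucc eV) =
      Matrix.fromBlocks ((C.symbol fun t => z t.castSucc).submatrix f id) 0 0
        (((starRingEnd ℂ) (z (Fin.last d)) - 1) • 1) := by
  ext (r | v) (⟨w, i⟩ | w)
  · simp [symbol, sumProdEquivProdFinSucc, h.edgeVec_inl, (h.ends_inl (f r)).1,
      (h.ends_inl (f r)).2, zpowVec_snoc]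
  · simp [symbol, sumProdEquivProdFinSucc, h.edgeVec_inl]
  · simp [symbol, sumProdEquivProdFinSucc, h.edgeVec_inr]
  · simp [symbol, sumProdEquivProdFinSucc, h.edgeVec_inr, (h.ends_inr v).1, (h.ends_inr v).2,
      zpowVec_snoc, zpowVec_zero, Matrix.one_apply, eq_comm (a := w)]
    split_ifs <;> simp

end IsProduct

end CrystalFramework

/-- Let `C` be a crystal framework in `ℝ^d` in Maxwell counting
equilibrium (`|E₀| = d|V₀|`, witnessed by the equiv `eSqC`) and let `Ct` be the
product framework `C × C_ℤ` in `ℝ^{d+1}` (same motif vertices, placements and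
lattice vectors padded by `0`, a new vertical lattice vector `e_{d+1}`, the old
motif edges padded by `0`, and a vertical edge `((v,0),(v,ε_{d+1}))` for each `v`).
Then `det Φ_{Ct}(z, z_{d+1}) = ± (z̄_{d+1} - 1)^{|V₀|} det Φ_C(z)`, the sign
depending only on the chosen orderings of rows and columns. -/
theorem product_framework_symbol_det {d : ℕ}
    (C : CrystalFramework d) (Ct : CrystalFramework (d + 1))
    (eV : Ct.V ≃ C.V) (eE : Ct.E ≃ C.E ⊕ C.V)
    (hp : ∀ v : Ct.V, Ct.p v = Fin.snoc (C.p (eV v)) 0)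
    (ha : ∀ j : Fin d, Ct.a j.castSucc = Fin.snoc (C.a j) 0)
    (halast : Ct.a (Fin.last d) = Fin.snoc (0 : Fin d → ℝ) 1)
    (hE1 : ∀ e : C.E,
      Ct.fst (eE.symm (Sum.inl e)) = (eV.symm (C.fst e).1, Fin.snoc (C.fst e).2 0) ∧
      Ct.snd (eE.symm (Sum.inl e)) = (eV.symm (C.snd e).1, Fin.snoc (C.snd e).2 0))
    (hE2 : ∀ v : C.V,
      Ct.fst (eE.symm (Sum.inr v)) = (eV.symm v, 0) ∧
      Ct.snd (eE.symm (Sum.inr v)) = (eV.symm v, Fin.snoc (0 : Fin d → ℤ) 1))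
    (eSqC : C.E ≃ C.V × Fin d) (eSq : Ct.E ≃ Ct.V × Fin (d + 1)) :
    ∃ s : ℂ, (s = 1 ∨ s = -1) ∧
      ∀ z : Fin (d + 1) → ℂ, OnTorus z →
        Matrix.det (Matrix.of fun i j : Ct.V × Fin (d + 1) =>
            Ct.symbol z (eSq.symm i) j) =
          s * ((starRingEnd ℂ) (z (Fin.last d)) - 1) ^ Fintype.card C.V *
            Matrix.det (Matrix.of fun i j : C.V × Fin d =>
              C.symbol (fun t => z t.castSucc) (eSqC.symm i) j) := by
  have h : C.IsProduct Ct eV eE := ⟨hp, ha, halast, hE1, hE2⟩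
  let rowEquiv : (C.V × Fin d) ⊕ C.V ≃ Ct.V × Fin (d + 1) :=
    (Equiv.sumCongr eSqC.symm (Equiv.refl C.V)).trans (eE.symm.trans eSq)
  let σ := (sumProdEquivProdFinSucc eV).trans rowEquiv.symm
  refine ⟨Equiv.Perm.sign σ, ?_, fun z _ => ?_⟩
  · obtain hs | hs := Int.units_eq_one_or (Equiv.Perm.sign σ) <;> simp [hs]
  calc Matrix.det (Matrix.of fun i j => Ct.symbol z (eSq.symm i) j)
      = ((Matrix.fromBlocks _ 0 0 _).reindex rowEquiv (sumProdEquivProdFinSucc eV)).det := by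
        rw [← h.symbol_submatrix_eq_fromBlocks eSqC.symm z]
        congr 1
        ext i j
        simp [rowEquiv]
    _ = Equiv.Perm.sign σ *
          ((starRingEnd ℂ) (z (Fin.last d)) - 1) ^ Fintype.card C.V *
          ((C.symbol fun t => z t.castSucc).submatrix eSqC.symm id).det := by
        rw [Matrix.det_reindex, Matrix.det_fromBlocks_zero₂₁, Matrix.det_smul, Matrix.det_one]
        ring
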